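/- arXiv:2403.09122 — 2 statements merged into one kernel-verified Lean document; each statement's English description precedes it below -/
import Mathlib

section
/- Let G be a finite simple graph on n vertices having a universal vertex u (a vertex adjacent to every other vertex of G). Then every vertex v ≠ u of G belongs to every MEG-set of G; in particular, meg(G) ≥ n - 1. -/
open SimpleGraph

/-- A pair of vertices `u`, `v` monitors an edge `e` if `u` and `v` are reachable from
each other and `e` belongs to every shortest path (walk of length `G.dist u v`)
between `u` and `v`. -/
def Monitors {V : Type*} (G : SimpleGraph V) (u v : V) (e : Sym2 V) : Prop :=
  G.Reachable u v ∧ ∀ p : G.Walk u v, p.length = G.dist u v → e ∈ p.edges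

/-- A monitoring edge-geodetic set of `G`: every edge of `G` is monitored by some
pair of vertices of `M`. -/
def IsMEGSet {V : Type*} (G : SimpleGraph V) (M : Set V) : Prop :=
  ∀ e ∈ G.edgeSet, ∃ u ∈ M, ∃ v ∈ M, Monitors G u v e

/-- The monitoring edge-geodetic number of `G`: the minimum size of an MEG-set. -/
noncomputable def meg {V : Type*} [Fintype V] (G : SimpleGraph V) : ℕ :=
  sInf {n : ℕ | ∃ M : Finset V, IsMEGSet G ↑M ∧ M.card = n}

lemma walk_edges_of_length_one {V : Type*} {G : SimpleGraph V} {a b : V}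
    (p : G.Walk a b) (hp : p.length = 1) : p.edges = [s(a, b)] := by
  match p with
  | .nil => simp at hp
  | .cons h .nil => simp
  | .cons h (.cons h' q) => simp [SimpleGraph.Walk.length_cons] at hp

lemma univ_isMEGSet {V : Type*} [Fintype V] (G : SimpleGraph V) :
    IsMEGSet G ↑(Finset.univ : Finset V) := by
  intro e he
  induction e with
  | h a b =>
    rw [SimpleGraph.mem_edgeSet] at he
    refine ⟨a, by simp, b, by simp, he.reachable, fun p hp => ?_⟩
    have hd : G.dist a b = 1 := SimpleGraph.dist_eq_one_iff_adj.mpr he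
    rw [walk_edges_of_length_one p (by rw [hp, hd])]
    simp

/-- if `u` is a universal vertex of `G`, then every vertex `v ≠ u` belongs to
every MEG-set of `G`; in particular `meg G ≥ |V(G)| - 1`. -/
theorem meg_of_universal_vertex {V : Type*} [Fintype V] (G : SimpleGraph V) (u : V)
    (hu : ∀ w : V, w ≠ u → G.Adj u w) :
    (∀ v : V, v ≠ u → ∀ M : Set V, IsMEGSet G M → v ∈ M) ∧
      Fintype.card V - 1 ≤ meg G := by
  classical
  have key : ∀ v : V, v ≠ u → ∀ M : Set V, IsMEGSet G M → v ∈ M := by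
    intro v hv M hM
    have hadj : G.Adj u v := hu v hv
    obtain ⟨x, hx, y, hy, hr, hmon⟩ := hM s(u, v) (by rwa [SimpleGraph.mem_edgeSet])
    -- it suffices to show v = x or v = y
    have hvxy : v = x ∨ v = y := by
      by_cases hxy : x = y
      · subst hxy
        have := hmon SimpleGraph.Walk.nil ((SimpleGraph.dist_self (G := G) (v := x)).symm)
        simp at this
      · by_cases haxy : G.Adj x y
        · have hd : G.dist x y = 1 := SimpleGraph.dist_eq_one_iff_adj.mpr haxy
          have := hmon (SimpleGraph.Walk.cons haxy SimpleGraph.Walk.nil) (by simp [hd])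
          simp [Sym2.eq_iff] at this
          rcases this with ⟨e1, e2⟩ | ⟨e1, e2⟩
          · exact Or.inr e2
          · exact Or.inl e2
        · have hxu : x ≠ u := by
            rintro rfl
            exact haxy (hu y (fun h => hxy h.symm))
          have hyu : y ≠ u := by
            rintro rfl
            exact haxy (hu x hxy).symm
          set w : G.Walk x y :=
            SimpleGraph.Walk.cons (hu x hxu).symm
              (SimpleGraph.Walk.cons (hu y hyu) SimpleGraph.Walk.nil) with hw
          have hd : G.dist x y = 2 := by
            have h2 : G.dist x y ≤ 2 := by
              have := G.dist_le w
              simpa [hw] using this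
            have h0 : G.dist x y ≠ 0 := by
              rw [ne_eq, hr.dist_eq_zero_iff]
              exact hxy
            have h1 : G.dist x y ≠ 1 := fun h => haxy (SimpleGraph.dist_eq_one_iff_adj.mp h)
            omega
          have := hmon w (by simp [hw, hd])
          simp [hw, Sym2.eq_iff] at this
          rcases this with (⟨e1, e2⟩ | e2) | e2 | ⟨e1, e2⟩
          · exact absurd e2 hv
          · exact Or.inl e2
          · exact Or.inr e2
          · exact absurd e2 hv
    rcases hvxy with rfl | rfl
    · exact hx
    · exact hy
  refine ⟨key, ?_⟩
  have hne : {n : ℕ | ∃ M : Finset V, IsMEGSet G ↑M ∧ M.card = n}.Nonempty :=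
    ⟨(Finset.univ : Finset V).card, Finset.univ, univ_isMEGSet G, rfl⟩
  obtain ⟨M, hM, hcard⟩ := Nat.sInf_mem hne
  have hsub : Finset.univ.erase u ⊆ M := by
    intro w hw
    have := key w (Finset.ne_of_mem_erase hw) ↑M hM
    exact_mod_cast this
  calc Fintype.card V - 1 = (Finset.univ.erase u).card := by
        rw [Finset.card_erase_of_mem (Finset.mem_univ u), Finset.card_univ]
    _ ≤ M.card := Finset.card_le_card hsub
    _ = meg G := hcard
end

section
/- Let G be a finite connected simple graph on n vertices with girth at least 5 (every cycle of G has length at least 5) and minimum degree at least 2, and let χ(G) denote its chromatic number. Then meg(G) ≤ n·(χ(G) - 1)/χ(G), i.e., χ(G)·meg(G) ≤ n·(χ(G) - 1). -/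
open SimpleGraph

private lemma no_triangle {V : Type*} {G : SimpleGraph V} (hg : 5 ≤ G.egirth)
    {a b c : V} (hab : G.Adj a b) (hbc : G.Adj b c) (hca : G.Adj c a) : False := by
  have hc : (Walk.cons hab (Walk.cons hbc (Walk.cons hca Walk.nil))).IsCycle := by
    have h1 := hab.ne; have h2 := hbc.ne; have h3 := hca.ne
    simp [Walk.isCycle_def, Walk.isTrail_def, Sym2.eq_iff]
    aesop
  have := le_egirth.mp hg _ _ hc
  norm_num [Walk.length_cons] at this

private lemma no_square {V : Type*} {G : SimpleGraph V} (hg : 5 ≤ G.egirth)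
    {a b c d : V} (hab : G.Adj a b) (hbc : G.Adj b c) (hcd : G.Adj c d) (hda : G.Adj d a)
    (hac : a ≠ c) (hbd : b ≠ d) : False := by
  have hc : (Walk.cons hab (Walk.cons hbc (Walk.cons hcd (Walk.cons hda Walk.nil)))).IsCycle := by
    simp [Walk.isCycle_def, Walk.isTrail_def, Sym2.eq_iff]
    aesop
  have := le_egirth.mp hg _ _ hc
  norm_num [Walk.length_cons] at this

/-- Adjacent pairs monitor the edge between them. -/
private lemma monitors_adj {V : Type*} [Fintype V] {G : SimpleGraph V} {x y : V}
    (hxy : G.Adj x y) : Monitors G x y s(x, y) := by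
  refine ⟨hxy.reachable, fun p hp => ?_⟩
  rw [(dist_eq_one_iff_adj).mpr hxy] at hp
  match p with
  | .nil => simp at hp
  | .cons h .nil => simp
  | .cons h (.cons h' q) => simp [Walk.length_cons] at hp

/-- The key geodesic lemma: if `x` is adjacent to both `y` and `z` with `z ≠ y`, and the girth
is at least 5, then the pair `(z, y)` monitors the edge `xy`. -/
private lemma monitors_two {V : Type*} [Fintype V] {G : SimpleGraph V} (hg : 5 ≤ G.egirth)
    {x y z : V} (hxy : G.Adj x y) (hxz : G.Adj x z) (hzy : z ≠ y) :
    Monitors G z y s(x, y) := by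
  have hnadj : ¬ G.Adj z y := fun h => no_triangle hg hxy h.symm hxz.symm
  have hr : G.Reachable z y := ⟨Walk.cons hxz.symm (Walk.cons hxy Walk.nil)⟩
  have hdist : G.dist z y = 2 := by
    have h2 : G.dist z y ≤ 2 := by
      simpa using dist_le (Walk.cons hxz.symm (Walk.cons hxy Walk.nil))
    have h0 : G.dist z y ≠ 0 := fun h => hzy (hr.dist_eq_zero_iff.mp h)
    have h1 : G.dist z y ≠ 1 := fun h => hnadj (dist_eq_one_iff_adj.mp h)
    omega
  refine ⟨hr, fun p hp => ?_⟩
  rw [hdist] at hp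
  match p with
  | .nil => simp at hp
  | .cons h .nil => simp at hp
  | .cons h (.cons h' (.cons h'' q)) => simp [Walk.length_cons] at hp
  | @Walk.cons _ _ _ w _ h (.cons h' .nil) =>
    -- walk z - w - y; show w = x
    by_cases hwx : w = x
    · subst hwx
      simp
    · exact (no_square hg hxz h h' hxy.symm (fun hh => hwx hh.symm) hzy).elim

/-- a connected graph on `n` vertices with girth at least 5 and minimum
degree at least 2 satisfies `meg G ≤ n (χ(G) - 1) / χ(G)`, stated multiplicatively as
`χ(G) * meg G ≤ n * (χ(G) - 1)`. -/
theorem meg_le_of_chromaticNumber {V : Type*} [Fintype V] (G : SimpleGraph V)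
    [DecidableRel G.Adj] (hconn : G.Connected)
    (hgirth : 5 ≤ G.egirth) (hdeg : ∀ v : V, 2 ≤ G.degree v) :
    G.chromaticNumber.toNat * meg G ≤
      Fintype.card V * (G.chromaticNumber.toNat - 1) := by
  classical
  set k := G.chromaticNumber.toNat with hk
  set n := Fintype.card V with hn
  have hne : Nonempty V := hconn.nonempty
  obtain ⟨C⟩ := G.colorable_chromaticNumber_of_fintype
  -- largest color class
  obtain ⟨i, -, hi⟩ := Finset.exists_max_image Finset.univ
    (fun i : Fin k => (Finset.univ.filter (fun v => C v = i)).card)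
    ⟨C (Classical.arbitrary V), Finset.mem_univ _⟩
  set I : Finset V := Finset.univ.filter (fun v => C v = i) with hI
  have hkc : n ≤ k * I.card := by
    have hsum : n = ∑ j : Fin k, (Finset.univ.filter (fun v => C v = j)).card := by
      rw [hn, ← Finset.card_univ]
      exact Finset.card_eq_sum_card_fiberwise (fun x _ => Finset.mem_univ _)
    calc n = ∑ j : Fin k, (Finset.univ.filter (fun v => C v = j)).card := hsum
      _ ≤ Finset.univ.card * I.card :=
        Finset.sum_le_card_nsmul _ _ _ (fun j _ => hi j (Finset.mem_univ _))
      _ = k * I.card := by rw [Finset.card_univ, Fintype.card_fin]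
  have hInd : ∀ a ∈ I, ∀ b ∈ I, ¬ G.Adj a b := by
    intro a ha b hb hab
    have := C.valid hab
    simp [hI, Finset.mem_filter] at ha hb
    exact this (ha.trans hb.symm)
  -- the complement of I is an MEG-set
  have hMEG : IsMEGSet G ↑(Iᶜ : Finset V) := by
    intro e he
    induction e with
    | h x y =>
      rw [mem_edgeSet] at he
      by_cases hx : x ∈ I
      · have hy : y ∉ I := fun hy => hInd x hx y hy he
        -- pick another neighbor z of x
        have hcard : 1 < (G.neighborFinset x).card := by
          rw [card_neighborFinset_eq_degree]; exact hdeg x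
        obtain ⟨z, hz, hzy⟩ := Finset.exists_mem_ne hcard y
        rw [mem_neighborFinset] at hz
        have hzI : z ∉ I := fun hzI => hInd x hx z hzI hz
        exact ⟨z, by simpa using hzI, y, by simpa using hy, monitors_two hgirth he hz hzy⟩
      · by_cases hy : y ∈ I
        · have hcard : 1 < (G.neighborFinset y).card := by
            rw [card_neighborFinset_eq_degree]; exact hdeg y
          obtain ⟨z, hz, hzx⟩ := Finset.exists_mem_ne hcard x
          rw [mem_neighborFinset] at hz
          have hzI : z ∉ I := fun hzI => hInd y hy z hzI hz
          have := monitors_two hgirth he.symm hz hzx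
          rw [Sym2.eq_swap] at this
          exact ⟨z, by simpa using hzI, x, by simpa using hx, this⟩
        · exact ⟨x, by simpa using hx, y, by simpa using hy, monitors_adj he⟩
  have hmeg : meg G ≤ n - I.card := by
    have : meg G ≤ (Iᶜ : Finset V).card := Nat.sInf_le ⟨Iᶜ, hMEG, rfl⟩
    rwa [Finset.card_compl] at this
  have hk1 : 1 ≤ k := by
    have : Nonempty (Fin k) := ⟨C (Classical.arbitrary V)⟩
    exact Fin.pos_iff_nonempty.mpr this
  have hcn : I.card ≤ n := by rw [hn]; exact Finset.card_le_univ I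
  calc k * meg G ≤ k * (n - I.card) := Nat.mul_le_mul_left k hmeg
    _ = k * n - k * I.card := Nat.mul_sub_left_distrib k n I.card
    _ ≤ k * n - n := Nat.sub_le_sub_left hkc _
    _ = n * (k - 1) := by
        rw [Nat.mul_sub_left_distrib n k 1, mul_one, mul_comm]
end
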